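/- Define sequences of polynomials by a_0 = 1, a_1(x) = x-2, a_{2k}(x) = (x-4)a_{2k-1}(x) - a_{2k-2}(x) and a_{2k+1}(x) = (x-2)a_{2k}(x) - a_{2k-1}(x) for k ≥ 1 (i.e. a_n is the characteristic polynomial of the n×n tridiagonal matrix with alternating diagonal (2,4,2,4,...) and sub/super-diagonals 1). Then for all k ≥ 0: a_{2k}(x) = P_k((x-3)²) and a_{2k+1}(x) = (x-2)·Q_k((x-3)²), where (P_n) and (Q_n) are the Fibonacci product polynomials. -/

import Mathlib

open Polynomial

/-- Fibonacci product polynomials `P`. -/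
noncomputable def fibP : ℕ → Polynomial ℤ
  | 0 => 1
  | 1 => X - 2
  | n + 2 => (X - 3) * fibP (n + 1) - fibP n

/-- Fibonacci product polynomials `Q`. -/
noncomputable def fibQ : ℕ → Polynomial ℤ
  | 0 => 1
  | 1 => X - 3
  | n + 2 => (X - 3) * fibQ (n + 1) - fibQ n

/-- The sequence `a_n`: `a_0 = 1`, `a_1 = x - 2`, and
`a_{2k} = (x-4)a_{2k-1} - a_{2k-2}`, `a_{2k+1} = (x-2)a_{2k} - a_{2k-1}`. -/
noncomputable def aSeq : ℕ → Polynomial ℤ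
  | 0 => 1
  | 1 => X - 2
  | n + 2 => (X - if n % 2 = 0 then 4 else 2) * aSeq (n + 1) - aSeq n

/-! Both sides of each identity satisfy `f (k + 2) = ((X - 3) ^ 2 - 3) * f (k + 1) - f k`:
eliminating the odd (resp. even) terms from the alternating recurrence of `aSeq` gives this,
since `(X - 4) * (X - 2) - 2 = (X - 3) ^ 2 - 3`, and composing the Fibonacci recurrence
`f (k + 2) = (X - 3) * f (k + 1) - f k` with `(X - 3) ^ 2` gives it as well.
So it suffices to compare the first two terms. -/

theorem eq_of_two_step_recurrence {R : Type*} [Ring R] (c : R) {u v : ℕ → R}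
    (hu : ∀ n, u (n + 2) = c * u (n + 1) - u n) (hv : ∀ n, v (n + 2) = c * v (n + 1) - v n)
    (h0 : u 0 = v 0) (h1 : u 1 = v 1) : u = v := by
  funext n
  induction n using Nat.twoStepInduction with
  | zero => exact h0
  | one => exact h1
  | more n ihn ihn1 => rw [hu, hv, ihn, ihn1]

theorem comp_two_step_recurrence {R : Type*} [CommRing R] (f : ℕ → R[X]) (c q : R[X])
    (hf : ∀ n, f (n + 2) = c * f (n + 1) - f n) (n : ℕ) :
    (f (n + 2)).comp q = c.comp q * (f (n + 1)).comp q - (f n).comp q := by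
  rw [hf, sub_comp, mul_comp]

theorem aSeq_add_four (n : ℕ) :
    aSeq (n + 4) = ((X - 3) ^ 2 - 3) * aSeq (n + 2) - aSeq n := by
  have h2 : (n + 2) % 2 = n % 2 := by omega
  rw [aSeq, aSeq, aSeq, h2]
  rcases Nat.mod_two_eq_zero_or_one n with h | h
  · have : (n + 1) % 2 = 1 := by omega
    simp only [h, this, reduceIte, one_ne_zero]
    ring
  · have : (n + 1) % 2 = 0 := by omega
    simp only [h, this, reduceIte, one_ne_zero]
    ring

theorem X_sub_three_comp_sq : (X - 3 : ℤ[X]).comp ((X - 3) ^ 2) = (X - 3) ^ 2 - 3 := by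
  simp

theorem aSeq_two_mul (k : ℕ) : aSeq (2 * k) = (fibP k).comp ((X - 3) ^ 2) := by
  refine congrFun (eq_of_two_step_recurrence ((X - 3) ^ 2 - 3) (u := fun k => aSeq (2 * k))
    (v := fun k => (fibP k).comp ((X - 3) ^ 2)) (fun n => ?_) (fun n => ?_) ?_ ?_) k
  · simpa only [mul_add] using aSeq_add_four (2 * n)
  · rw [comp_two_step_recurrence fibP (X - 3) _ (fun _ => rfl) n, X_sub_three_comp_sq]
  · simp [aSeq, fibP]
  · simp only [aSeq, Nat.zero_mod, ↓reduceIte, fibP, sub_comp, X_comp, ofNat_comp]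
    ring

theorem aSeq_two_mul_add_one (k : ℕ) :
    aSeq (2 * k + 1) = (X - 2) * (fibQ k).comp ((X - 3) ^ 2) := by
  refine congrFun (eq_of_two_step_recurrence ((X - 3) ^ 2 - 3) (u := fun k => aSeq (2 * k + 1))
    (v := fun k => (X - 2) * (fibQ k).comp ((X - 3) ^ 2)) (fun n => ?_) (fun n => ?_) ?_ ?_) k
  · simpa only [mul_add] using aSeq_add_four (2 * n + 1)
  · rw [comp_two_step_recurrence fibQ (X - 3) _ (fun _ => rfl) n, X_sub_three_comp_sq]
    ring
  · simp [aSeq, fibQ]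
  · simp only [aSeq, Nat.mod_succ, one_ne_zero, ↓reduceIte, Nat.zero_mod, fibQ, sub_comp, X_comp,
      ofNat_comp]
    ring

theorem stmt16 (k : ℕ) :
    aSeq (2 * k) = (fibP k).comp ((X - 3) ^ 2) ∧
    aSeq (2 * k + 1) = (X - 2) * (fibQ k).comp ((X - 3) ^ 2) :=
  ⟨aSeq_two_mul k, aSeq_two_mul_add_one k⟩
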